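/- arXiv:2301.07954 — 4 statements merged into one kernel-verified Lean document; each statement's English description precedes it below -/
import Mathlib

section
/- Let I ⊆ ℝ be an open interval and y : I → ℂ twice differentiable. For λ ∈ ℂ \ {0} and t ∈ I define the 2×2 complex matrices A(λ,t) = (4λ⁴ + t + 2y(t)²)·σ₃ − i·(4y(t)λ² + t + 2y(t)²)·σ₂ − (2y'(t)λ + 1/(2λ))·σ₁ and B(λ,t) = (λ + y(t)/λ)·σ₃ − (i·y(t)/λ)·σ₂. Then the zero-curvature (compatibility) equation ∂A/∂t (λ,t) − ∂B/∂λ (λ,t) + A(λ,t)·B(λ,t) − B(λ,t)·A(λ,t) = 0 holds for all λ ∈ ℂ \ {0} and all t ∈ I if and only if y''(t) = 6·y(t)² + t for all t ∈ I. -/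
open Matrix

noncomputable section

/-- The Pauli matrix σ₁. -/
def pauli1 : Matrix (Fin 2) (Fin 2) ℂ := !![0, 1; 1, 0]

/-- The Pauli matrix σ₂. -/
def pauli2 : Matrix (Fin 2) (Fin 2) ℂ := !![0, -Complex.I; Complex.I, 0]

/-- The Pauli matrix σ₃. -/
def pauli3 : Matrix (Fin 2) (Fin 2) ℂ := !![1, 0; 0, -1]

/-- The `λ`-coefficient matrix `A(λ, t)` of the PI Lax pair, with `y = y(t)`, `v = y'(t)`. -/
def laxA (y v lam t : ℂ) : Matrix (Fin 2) (Fin 2) ℂ :=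
  (4 * lam ^ 4 + t + 2 * y ^ 2) • pauli3
    - (Complex.I * (4 * y * lam ^ 2 + t + 2 * y ^ 2)) • pauli2
    - (2 * v * lam + 1 / (2 * lam)) • pauli1

/-- The `t`-coefficient matrix `B(λ, t)` of the PI Lax pair, with `y = y(t)`. -/
def laxB (y lam : ℂ) : Matrix (Fin 2) (Fin 2) ℂ :=
  (lam + y / lam) • pauli3 - (Complex.I * y / lam) • pauli2

lemma derivA_entry (y : ℝ → ℂ) (t : ℝ) (hY : DifferentiableAt ℝ y t)
    (hV : DifferentiableAt ℝ (deriv y) t) (lam : ℂ) (i j : Fin 2) :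
    deriv (fun t' : ℝ => laxA (y t') (deriv y t') lam (t' : ℂ) i j) t
      = (1 + 4 * y t * deriv y t) * pauli3 i j
        - Complex.I * (4 * deriv y t * lam ^ 2 + 1 + 4 * y t * deriv y t) * pauli2 i j
        - (2 * deriv (deriv y) t * lam) * pauli1 i j := by
  have hre : HasDerivAt (fun t' : ℝ => (t' : ℂ)) 1 t := by
    simpa using (hasDerivAt_id t).ofReal_comp
  have hYd := hY.hasDerivAt
  have hVd := hV.hasDerivAt
  have h1 : HasDerivAt (fun t' : ℝ => (4 * lam ^ 4 + (t' : ℂ) + 2 * (y t' * y t')))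
      (1 + 4 * y t * deriv y t) t := by
    have := ((hasDerivAt_const t (4 * lam ^ 4)).add hre).add
      ((hYd.mul hYd).const_mul (2 : ℂ))
    refine this.congr_deriv ?_
    ring
  have h2 : HasDerivAt
      (fun t' : ℝ => Complex.I * (4 * y t' * lam ^ 2 + (t' : ℂ) + 2 * (y t' * y t')))
      (Complex.I * (4 * deriv y t * lam ^ 2 + 1 + 4 * y t * deriv y t)) t := by
    have := ((((hYd.const_mul (4 : ℂ)).mul_const (lam ^ 2)).add hre).add
      ((hYd.mul hYd).const_mul (2 : ℂ))).const_mul Complex.I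
    refine this.congr_deriv ?_
    ring
  have h3 : HasDerivAt (fun t' : ℝ => (2 * deriv y t' * lam + 1 / (2 * lam)))
      (2 * deriv (deriv y) t * lam) t := by
    have := (((hVd.const_mul (2 : ℂ)).mul_const lam)).add (hasDerivAt_const t (1 / (2 * lam)))
    refine this.congr_deriv ?_
    ring
  have H : HasDerivAt (fun t' : ℝ => laxA (y t') (deriv y t') lam (t' : ℂ) i j)
      ((1 + 4 * y t * deriv y t) * pauli3 i j
        - Complex.I * (4 * deriv y t * lam ^ 2 + 1 + 4 * y t * deriv y t) * pauli2 i j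
        - (2 * deriv (deriv y) t * lam) * pauli1 i j) t := by
    have e : (fun t' : ℝ => laxA (y t') (deriv y t') lam (t' : ℂ) i j)
        = fun t' : ℝ => (4 * lam ^ 4 + (t' : ℂ) + 2 * (y t' * y t')) * pauli3 i j
          - Complex.I * (4 * y t' * lam ^ 2 + (t' : ℂ) + 2 * (y t' * y t')) * pauli2 i j
          - (2 * deriv y t' * lam + 1 / (2 * lam)) * pauli1 i j := by
      funext t'
      simp only [laxA, Matrix.sub_apply, Matrix.smul_apply, smul_eq_mul]
      ring
    rw [e]
    exact ((h1.mul_const _).sub (h2.mul_const _)).sub (h3.mul_const _)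
  exact H.deriv

lemma derivB_entry (Y lam : ℂ) (hlam : lam ≠ 0) (i j : Fin 2) :
    deriv (fun mu : ℂ => laxB Y mu i j) lam
      = (1 - Y / lam ^ 2) * pauli3 i j + (Complex.I * Y / lam ^ 2) * pauli2 i j := by
  have hinv := hasDerivAt_inv hlam
  have h1 : HasDerivAt (fun mu : ℂ => mu + Y / mu) (1 - Y / lam ^ 2) lam := by
    simp only [div_eq_mul_inv]
    have := (hasDerivAt_id lam).add (hinv.const_mul Y)
    refine this.congr_deriv ?_
    field_simp
    ring
  have h2 : HasDerivAt (fun mu : ℂ => Complex.I * Y / mu) (-(Complex.I * Y / lam ^ 2)) lam := by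
    simp only [div_eq_mul_inv]
    have := hinv.const_mul (Complex.I * Y)
    refine this.congr_deriv ?_
    field_simp
  have H : HasDerivAt (fun mu : ℂ => laxB Y mu i j)
      ((1 - Y / lam ^ 2) * pauli3 i j + (Complex.I * Y / lam ^ 2) * pauli2 i j) lam := by
    have e : (fun mu : ℂ => laxB Y mu i j)
        = fun mu : ℂ => (mu + Y / mu) * pauli3 i j - (Complex.I * Y / mu) * pauli2 i j := by
      funext mu; simp [laxB, Matrix.sub_apply, Matrix.smul_apply, smul_eq_mul]
    rw [e]
    have := (h1.mul_const (pauli3 i j)).sub (h2.mul_const (pauli2 i j))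
    refine this.congr_deriv ?_
    ring
  exact H.deriv

lemma p3_00 : pauli3 0 0 = 1 := rfl
lemma p3_01 : pauli3 0 1 = 0 := rfl
lemma p3_10 : pauli3 1 0 = 0 := rfl
lemma p3_11 : pauli3 1 1 = -1 := rfl
lemma p2_00 : pauli2 0 0 = 0 := rfl
lemma p2_01 : pauli2 0 1 = -Complex.I := rfl
lemma p2_10 : pauli2 1 0 = Complex.I := rfl
lemma p2_11 : pauli2 1 1 = 0 := rfl
lemma p1_00 : pauli1 0 0 = 0 := rfl
lemma p1_01 : pauli1 0 1 = 1 := rfl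
lemma p1_10 : pauli1 1 0 = 1 := rfl
lemma p1_11 : pauli1 1 1 = 0 := rfl

theorem stmt4 (I : Set ℝ) (hIopen : IsOpen I) (hIconn : I.OrdConnected)
    (y : ℝ → ℂ)
    (hy : ∀ t ∈ I, DifferentiableAt ℝ y t)
    (hy' : ∀ t ∈ I, DifferentiableAt ℝ (deriv y) t) :
    (∀ lam : ℂ, lam ≠ 0 → ∀ t ∈ I, ∀ i j : Fin 2,
        deriv (fun t' : ℝ => laxA (y t') (deriv y t') lam (t' : ℂ) i j) t
          - deriv (fun mu : ℂ => laxB (y t) mu i j) lam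
          + (laxA (y t) (deriv y t) lam (t : ℂ) * laxB (y t) lam
              - laxB (y t) lam * laxA (y t) (deriv y t) lam (t : ℂ)) i j = 0)
      ↔ (∀ t ∈ I, deriv (deriv y) t = 6 * y t ^ 2 + (t : ℂ)) := by
  constructor
  · intro h t ht
    have key := h 1 one_ne_zero t ht 0 1
    rw [derivA_entry y t (hy t ht) (hy' t ht) 1 0 1,
        derivB_entry (y t) 1 one_ne_zero 0 1] at key
    simp only [laxA, laxB, Matrix.mul_apply, Fin.sum_univ_two,
      Matrix.sub_apply, Matrix.smul_apply, smul_eq_mul, p3_00, p3_01, p3_10, p3_11,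
      p2_00, p2_01, p2_10, p2_11, p1_00, p1_01, p1_10, p1_11] at key
    linear_combination (-(1:ℂ)/2) * key
      + ((1:ℂ)/2 - (t:ℂ) + 2 * deriv y t + y t / 2 + 2 * y t * deriv y t - 6 * y t ^ 2)
        * Complex.I_sq
  · intro hODE lam hlam t ht i j
    rw [derivA_entry y t (hy t ht) (hy' t ht) lam i j,
        derivB_entry (y t) lam hlam i j, hODE t ht]
    have hc := mul_inv_cancel₀ hlam
    fin_cases i <;> fin_cases j <;>
      simp only [laxA, laxB, Matrix.mul_apply, Fin.sum_univ_two, Fin.isValue, Fin.zero_eta,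
        Fin.mk_one, Matrix.sub_apply, Matrix.smul_apply, smul_eq_mul, p3_00, p3_01, p3_10, p3_11,
        p2_00, p2_01, p2_10, p2_11, p1_00, p1_01, p1_10, p1_11]
    · linear_combination (y t * lam⁻¹ ^ 2 + 4 * y t * deriv y t * lam * lam⁻¹) * Complex.I_sq
        + (-4 * y t * deriv y t) * hc
    · linear_combination (1 - 2 * (t:ℂ) * lam + 4 * deriv y t * lam ^ 2 + y t * lam⁻¹ ^ 2
          - 8 * y t * lam ^ 3 + 8 * y t * lam ^ 4 * lam⁻¹ + 4 * y t * deriv y t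
          - 4 * y t ^ 2 * lam - 8 * y t ^ 2 * lam ^ 2 * lam⁻¹) * Complex.I_sq
        + (1 - 8 * y t * lam ^ 3 + 4 * y t * deriv y t + 8 * y t ^ 2 * lam) * hc
    · linear_combination (-1 - 2 * (t:ℂ) * lam - 4 * deriv y t * lam ^ 2 - y t * lam⁻¹ ^ 2
          - 8 * y t * lam ^ 3 + 8 * y t * lam ^ 4 * lam⁻¹ - 4 * y t * deriv y t
          - 4 * y t ^ 2 * lam - 8 * y t ^ 2 * lam ^ 2 * lam⁻¹) * Complex.I_sq
        + (-1 - 8 * y t * lam ^ 3 - 4 * y t * deriv y t + 8 * y t ^ 2 * lam) * hc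
    · linear_combination (-(y t * lam⁻¹ ^ 2) - 4 * y t * deriv y t * lam * lam⁻¹) * Complex.I_sq
        + (4 * y t * deriv y t) * hc
end
end

section
/- Let t, y, v ∈ ℂ be constants, let U ⊆ ℂ be open, and let φ₁, φ₂ : U → ℂ be holomorphic functions satisfying the system φ₁'(λ) = −v·φ₁(λ) + (2λ² + 2yλ + t + 2y²)·φ₂(λ) and φ₂'(λ) = 2(λ − y)·φ₁(λ) + v·φ₂(λ) on U. Let V ⊆ U be open with y ∉ V, and let h : V → ℂ be a holomorphic function with h(λ)² = 2(λ − y) for all λ ∈ V. Then the function Y := φ₂/h is holomorphic on V and satisfies the Schrödinger equation Y''(λ) = [ v² + 4λ³ + 2λt − 2yt − 4y³ − v/(λ − y) + 3/(4(λ − y)²) ]·Y(λ) for all λ ∈ V. -/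
noncomputable section

theorem stmt6 (t y v : ℂ) (U : Set ℂ) (hU : IsOpen U) (φ₁ φ₂ : ℂ → ℂ)
    (h1 : ∀ lam ∈ U,
      HasDerivAt φ₁ (-v * φ₁ lam + (2 * lam ^ 2 + 2 * y * lam + t + 2 * y ^ 2) * φ₂ lam) lam)
    (h2 : ∀ lam ∈ U, HasDerivAt φ₂ (2 * (lam - y) * φ₁ lam + v * φ₂ lam) lam)
    (V : Set ℂ) (hV : IsOpen V) (hVU : V ⊆ U) (hyV : y ∉ V)
    (h : ℂ → ℂ) (hh : DifferentiableOn ℂ h V)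
    (hsq : ∀ lam ∈ V, h lam ^ 2 = 2 * (lam - y)) :
    DifferentiableOn ℂ (fun lam => φ₂ lam / h lam) V ∧
    ∀ lam ∈ V,
      deriv (deriv (fun lam => φ₂ lam / h lam)) lam =
        (v ^ 2 + 4 * lam ^ 3 + 2 * lam * t - 2 * y * t - 4 * y ^ 3
            - v / (lam - y) + 3 / (4 * (lam - y) ^ 2)) * (φ₂ lam / h lam) := by
  have hsub : ∀ lam ∈ V, lam - y ≠ 0 := by
    intro lam hl h0
    exact hyV ((sub_eq_zero.mp h0) ▸ hl)
  have hne : ∀ lam ∈ V, h lam ≠ 0 := by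
    intro lam hl h0
    apply hsub lam hl
    have hs := hsq lam hl
    rw [h0] at hs
    have h2' : (2:ℂ) * (lam - y) = 0 := by simpa using hs.symm
    simpa using h2'
  have hd : ∀ lam ∈ V, HasDerivAt h (1 / h lam) lam := by
    intro lam hl
    have hdiff : DifferentiableAt ℂ h lam := hh.differentiableAt (hV.mem_nhds hl)
    have hD : HasDerivAt h (deriv h lam) lam := hdiff.hasDerivAt
    have hsqD : HasDerivAt (fun x => h x ^ 2) (2 * h lam ^ 1 * deriv h lam) lam := hD.pow 2
    have hsqD' : HasDerivAt (fun x => h x ^ 2) 2 lam := by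
      have hlin : HasDerivAt (fun x : ℂ => 2 * (x - y)) 2 lam := by
        simpa using ((hasDerivAt_id lam).sub_const y).const_mul (2:ℂ)
      apply hlin.congr_of_eventuallyEq
      filter_upwards [hV.mem_nhds hl] with x hx using hsq x hx
    have huniq : 2 * h lam ^ 1 * deriv h lam = 2 := hsqD.unique hsqD'
    have hkey : deriv h lam = 1 / h lam := by
      have hn := hne lam hl
      field_simp
      linear_combination huniq / 2
    rw [← hkey]; exact hD
  set Y' : ℂ → ℂ := fun x => h x * φ₁ x + v * φ₂ x / h x - φ₂ x / h x ^ 3 with hY'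
  have hA : ∀ lam ∈ V, HasDerivAt (fun x => φ₂ x / h x) (Y' lam) lam := by
    intro lam hl
    have H := (h2 lam (hVU hl)).div (hd lam hl) (hne lam hl)
    refine H.congr_deriv ?_
    symm
    have hs := hsq lam hl
    have hn := hne lam hl
    simp only [hY']
    field_simp
    linear_combination (h lam ^ 2 * φ₁ lam) * hs
  have hB : ∀ lam ∈ V,
      HasDerivAt Y' ((v ^ 2 + 4 * lam ^ 3 + 2 * lam * t - 2 * y * t - 4 * y ^ 3
            - v / (lam - y) + 3 / (4 * (lam - y) ^ 2)) * (φ₂ lam / h lam)) lam := by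
    intro lam hl
    have hn := hne lam hl
    have hs := hsq lam hl
    have hsyn := hsub lam hl
    have d1 : HasDerivAt (fun x => h x * φ₁ x)
        (1 / h lam * φ₁ lam + h lam * (-v * φ₁ lam + (2 * lam ^ 2 + 2 * y * lam + t + 2 * y ^ 2) * φ₂ lam)) lam :=
      (hd lam hl).mul (h1 lam (hVU hl))
    have d2 : HasDerivAt (fun x => v * φ₂ x / h x)
        ((v * (2 * (lam - y) * φ₁ lam + v * φ₂ lam) * h lam - v * φ₂ lam * (1 / h lam)) / h lam ^ 2) lam :=
      ((h2 lam (hVU hl)).const_mul v).div (hd lam hl) hn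
    have d3 : HasDerivAt (fun x => φ₂ x / h x ^ 3)
        (((2 * (lam - y) * φ₁ lam + v * φ₂ lam) * h lam ^ 3 - φ₂ lam * (3 * h lam ^ 2 * (1 / h lam))) / (h lam ^ 3) ^ 2) lam :=
      (h2 lam (hVU hl)).div ((hd lam hl).pow 3) (pow_ne_zero 3 hn)
    have H := (d1.add d2).sub d3
    refine H.congr_deriv ?_
    symm
    have key : lam - y = h lam ^ 2 / 2 := by linear_combination -hs / 2
    have hrhs : (v ^ 2 + 4 * lam ^ 3 + 2 * lam * t - 2 * y * t - 4 * y ^ 3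
            - v / (lam - y) + 3 / (4 * (lam - y) ^ 2)) * (φ₂ lam / h lam)
        = (v ^ 2 + 2 * (lam - y) * (2 * lam ^ 2 + 2 * y * lam + t + 2 * y ^ 2)
            - v / (lam - y) + 3 / (4 * (lam - y) ^ 2)) * (φ₂ lam / h lam) := by ring
    rw [hrhs, key]
    field_simp [hn]
    ring
  constructor
  · intro lam hl
    exact ((hA lam hl).differentiableAt).differentiableWithinAt
  · intro lam hl
    have hev : deriv (fun x => φ₂ x / h x) =ᶠ[nhds lam] Y' := by
      filter_upwards [hV.mem_nhds hl] with x hx using (hA x hx).deriv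
    calc deriv (deriv fun x => φ₂ x / h x) lam = deriv Y' lam := hev.deriv_eq
      _ = _ := (hB lam hl).deriv

end
end

section
/- Let s : ℤ → ℂ satisfy s(k+5) = s(k) and s(k) = i·(1 + s(k+2)·s(k+3)) for all k ∈ ℤ, and suppose s(1)·s(−1) ≠ 0. Then s(0) = (s(1) + s(−1) − i) / (−s(1)·s(−1)). -/
theorem stmt7 (s : ℤ → ℂ)
    (hper : ∀ k : ℤ, s (k + 5) = s k)
    (hcyc : ∀ k : ℤ, s k = Complex.I * (1 + s (k + 2) * s (k + 3)))
    (hne : s 1 * s (-1) ≠ 0) :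
    s 0 = (s 1 + s (-1) - Complex.I) / (-(s 1 * s (-1))) := by
  have h1 := hcyc 1
  have h2 := hcyc (-2)
  have p1 := hper (-2)
  have p2 := hper (-1)
  norm_num at h1 h2 p1 p2
  rw [p1, p2] at h1
  rw [eq_div_iff (neg_ne_zero.mpr hne)]
  linear_combination -h1 - Complex.I * (s (-1)) * h2 -
    (s (-1) + s 0 * s 1 * s (-1)) * Complex.I_sq
end

section
/- lim_{R → ∞} ( ∫₁^R √(r³ − 1) dr − (2/5)·R^{5/2} ) = −(√3/5)·𝔅, i.e., the limit equals −(√3/5)·Γ(1/2)·Γ(1/3)/Γ(5/6). -/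
open Real Set MeasureTheory Filter Topology intervalIntegral

lemma gamma_ident : Real.Gamma (1/6) / Real.Gamma (2/3)
    = Real.sqrt 3 * Real.Gamma (1/3) / Real.Gamma (5/6) := by
  have h6 := Real.Gamma_mul_Gamma_one_sub (1/6)
  have h3 := Real.Gamma_mul_Gamma_one_sub (1/3)
  rw [show (1:ℝ) - 1/6 = 5/6 by norm_num, show Real.pi * (1/6) = π/6 by ring,
    Real.sin_pi_div_six] at h6
  rw [show (1:ℝ) - 1/3 = 2/3 by norm_num, show Real.pi * (1/3) = π/3 by ring,
    Real.sin_pi_div_three] at h3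
  have p6 : 0 < Real.Gamma (1/6) := Real.Gamma_pos_of_pos (by norm_num)
  have p3 : 0 < Real.Gamma (1/3) := Real.Gamma_pos_of_pos (by norm_num)
  have p23 : 0 < Real.Gamma (2/3) := Real.Gamma_pos_of_pos (by norm_num)
  have p56 : 0 < Real.Gamma (5/6) := Real.Gamma_pos_of_pos (by norm_num)
  have s3 : Real.sqrt 3 > 0 := Real.sqrt_pos.mpr (by norm_num)
  have key : Real.Gamma (1/6) * Real.Gamma (5/6) = Real.sqrt 3 * (Real.Gamma (1/3) * Real.Gamma (2/3)) := by
    rw [h6, h3]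
    field_simp
  field_simp
  nlinarith [key, Real.pi_pos]

lemma beta_val : (∫ x in (0:ℝ)..1, x ^ (-(5:ℝ)/6) * (1-x) ^ (-(1:ℝ)/2))
    = Real.Gamma (1/6) * Real.Gamma (1/2) / Real.Gamma (2/3) := by
  have h := Complex.Gamma_mul_Gamma_eq_betaIntegral
    (s := (1/6 : ℂ)) (t := (1/2 : ℂ)) (by norm_num) (by norm_num)
  have h16 : Complex.Gamma (1/6) = (Real.Gamma (1/6) : ℂ) := by
    rw [show (1/6 : ℂ) = ((1/6 : ℝ) : ℂ) by norm_num, Complex.Gamma_ofReal]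
  have h12 : Complex.Gamma (1/2) = (Real.Gamma (1/2) : ℂ) := by
    rw [show (1/2 : ℂ) = ((1/2 : ℝ) : ℂ) by norm_num, Complex.Gamma_ofReal]
  have h23 : Complex.Gamma (1/6 + 1/2) = (Real.Gamma (2/3) : ℂ) := by
    rw [show (1/6 + 1/2 : ℂ) = ((2/3 : ℝ) : ℂ) by norm_num, Complex.Gamma_ofReal]
  have hbeta : Complex.betaIntegral (1/6) (1/2)
      = ((∫ x in (0:ℝ)..1, x ^ (-(5:ℝ)/6) * (1-x) ^ (-(1:ℝ)/2) : ℝ) : ℂ) := by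
    rw [Complex.betaIntegral, ← intervalIntegral.integral_ofReal]
    apply intervalIntegral.integral_congr
    intro x hx
    rw [Set.uIcc_of_le (by norm_num : (0:ℝ) ≤ 1)] at hx
    have hx0 : 0 ≤ x := hx.1
    have hx1 : 0 ≤ 1 - x := by linarith [hx.2]
    push_cast
    rw [Complex.ofReal_cpow hx0, Complex.ofReal_cpow hx1]
    push_cast
    norm_num
  have hne : Complex.Gamma (1/6 + 1/2) ≠ 0 := by
    rw [h23]
    exact_mod_cast (Real.Gamma_pos_of_pos (by norm_num : (0:ℝ) < 2/3)).ne'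
  rw [hbeta, h16, h12, h23] at h
  have hne' : (Real.Gamma (2/3) : ℂ) ≠ 0 := h23 ▸ hne
  have : ((∫ x in (0:ℝ)..1, x ^ (-(5:ℝ)/6) * (1-x) ^ (-(1:ℝ)/2) : ℝ) : ℂ)
      = ((Real.Gamma (1/6) * Real.Gamma (1/2) / Real.Gamma (2/3) : ℝ) : ℂ) := by
    rw [Complex.ofReal_div, Complex.ofReal_mul, eq_div_iff hne', h]
    ring
  exact_mod_cast this

lemma subst_val :
    (∫ x in (0:ℝ)..1, x ^ (-(5:ℝ)/6) * (1-x) ^ (-(1:ℝ)/2))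
      = 3 * ∫ r in Ioi (1:ℝ), (Real.sqrt (r ^ 3 - 1))⁻¹ := by
  have himg : (fun r : ℝ => (r ^ 3)⁻¹) '' Ioi 1 = Ioo 0 1 := by
    ext u
    constructor
    · rintro ⟨r, hr, rfl⟩
      rw [mem_Ioi] at hr
      have h1 : (1:ℝ) < r ^ 3 := one_lt_pow₀ hr (by norm_num)
      refine ⟨by positivity, ?_⟩
      rw [inv_lt_one_iff₀]; right; exact h1
    · rintro ⟨hu0, hu1⟩
      refine ⟨u ^ (-(1:ℝ)/3), ?_, ?_⟩
      · rw [mem_Ioi, Real.one_lt_rpow_iff_of_pos hu0]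
        right
        exact ⟨hu1, by norm_num⟩
      · show ((u ^ (-(1:ℝ)/3)) ^ 3)⁻¹ = u
        rw [← Real.rpow_natCast (u ^ (-(1:ℝ)/3)) 3, ← Real.rpow_mul hu0.le]
        push_cast
        norm_num [Real.rpow_neg_one]
  have hderiv : ∀ r ∈ Ioi (1:ℝ), HasDerivWithinAt (fun r : ℝ => (r ^ 3)⁻¹)
      (-(3 * r ^ 2) / (r ^ 3) ^ 2) (Ioi 1) r := by
    intro r hr
    rw [mem_Ioi] at hr
    have h : HasDerivAt (fun r : ℝ => (r ^ 3)⁻¹) (-(3 * r ^ 2) / (r ^ 3) ^ 2) r := by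
      have := (hasDerivAt_pow 3 r).inv (by positivity)
      have e : (-(3 * r ^ 2) / (r ^ 3) ^ 2) = (-(((3:ℕ):ℝ) * r ^ (3 - 1)) / (r ^ 3) ^ 2) := by norm_num
      rw [e]; exact this
    exact h.hasDerivWithinAt
  have hinj : InjOn (fun r : ℝ => (r ^ 3)⁻¹) (Ioi 1) := by
    intro a ha b hb hab
    simp only [mem_Ioi] at ha hb
    simp only [inv_inj] at hab
    rcases lt_trichotomy a b with h | h | h
    · exact absurd hab (ne_of_lt (pow_lt_pow_left₀ h (by linarith) (by norm_num)))
    · exact h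
    · exact absurd hab.symm (ne_of_lt (pow_lt_pow_left₀ h (by linarith) (by norm_num)))
  have key := MeasureTheory.integral_image_eq_integral_abs_deriv_smul
    measurableSet_Ioi hderiv hinj (fun u => u ^ (-(5:ℝ)/6) * (1-u) ^ (-(1:ℝ)/2))
  rw [himg] at key
  rw [intervalIntegral.integral_of_le (by norm_num : (0:ℝ) ≤ 1),
    MeasureTheory.integral_Ioc_eq_integral_Ioo, key]
  rw [← MeasureTheory.integral_const_mul]
  apply MeasureTheory.setIntegral_congr_fun measurableSet_Ioi
  intro r hr
  rw [mem_Ioi] at hr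
  have hr0 : (0:ℝ) < r := by linarith
  have hr3 : (0:ℝ) < r ^ 3 := by positivity
  have hr31 : (0:ℝ) < r ^ 3 - 1 := by
    have : (1:ℝ) < r ^ 3 := one_lt_pow₀ hr (by norm_num)
    linarith
  simp only [smul_eq_mul]
  have e1 : |(-(3 * r ^ 2) / (r ^ 3) ^ 2)| = 3 * r ^ (-4 : ℝ) := by
    rw [abs_div, abs_neg, abs_of_nonneg (by positivity : (0:ℝ) ≤ 3 * r ^ 2),
      abs_of_nonneg (by positivity : (0:ℝ) ≤ ((r:ℝ) ^ 3) ^ 2),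
      show ((r:ℝ) ^ 3) ^ 2 = r ^ (6:ℕ) by ring,
      ← Real.rpow_natCast r 2, ← Real.rpow_natCast r 6, mul_div_assoc,
      ← Real.rpow_sub hr0]
    norm_num
  have e2 : ((r ^ 3 : ℝ))⁻¹ ^ (-(5:ℝ)/6) = r ^ ((5:ℝ)/2) := by
    rw [← Real.rpow_natCast r 3, ← Real.rpow_neg_one,
      ← Real.rpow_mul hr0.le, ← Real.rpow_mul hr0.le]
    push_cast
    norm_num
  have e3 : ((1:ℝ) - (r ^ 3)⁻¹) ^ (-(1:ℝ)/2)
      = (r ^ 3 - 1) ^ (-(1:ℝ)/2) * r ^ ((3:ℝ)/2) := by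
    rw [show (1:ℝ) - (r ^ 3)⁻¹ = (r ^ 3 - 1) / r ^ 3 by field_simp,
      Real.div_rpow hr31.le hr3.le, div_eq_mul_inv,
      ← Real.rpow_natCast r 3, ← Real.rpow_neg_one]
    rw [← Real.rpow_mul hr0.le, ← Real.rpow_mul hr0.le]
    push_cast
    norm_num
  have hs : (Real.sqrt (r ^ 3 - 1))⁻¹ = (r ^ 3 - 1) ^ (-(1:ℝ)/2) := by
    rw [Real.sqrt_eq_rpow, ← Real.rpow_neg_one ((r ^ 3 - 1) ^ ((1:ℝ)/2)),
      ← Real.rpow_mul hr31.le]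
    norm_num
  have e4 : r ^ (-4:ℝ) * (r ^ ((5:ℝ)/2) * r ^ ((3:ℝ)/2)) = 1 := by
    rw [← Real.rpow_add hr0, ← Real.rpow_add hr0]
    norm_num
  rw [e1, e2, e3, hs]
  linear_combination (3 * (r ^ 3 - 1) ^ (-(1:ℝ)/2)) * e4

lemma cont_inv : ContinuousOn (fun r : ℝ => (Real.sqrt (r ^ 3 - 1))⁻¹) (Ioi 1) := by
  intro x hx
  rw [mem_Ioi] at hx
  have h1 : (0:ℝ) < x ^ 3 - 1 := by
    have := one_lt_pow₀ hx (by norm_num : 3 ≠ 0)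
    linarith
  apply ContinuousWithinAt.inv₀
  · exact ((continuous_pow 3).sub continuous_const).continuousWithinAt.sqrt
  · exact (Real.sqrt_pos.mpr h1).ne'

lemma inv_integrable :
    IntegrableOn (fun r : ℝ => (Real.sqrt (r ^ 3 - 1))⁻¹) (Ioi 1) := by
  have h12 : IntegrableOn (fun r : ℝ => (Real.sqrt (r ^ 3 - 1))⁻¹) (Ioc 1 2) := by
    have hbint : IntegrableOn (fun r : ℝ => (r - 1) ^ (-(1:ℝ)/2)) (Ioc 1 2) := by
      have : IntervalIntegrable (fun x : ℝ => x ^ (-(1:ℝ)/2)) volume 0 1 :=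
        intervalIntegral.intervalIntegrable_rpow' (by norm_num)
      have h2 := this.comp_sub_right 1
      rw [intervalIntegrable_iff_integrableOn_Ioc_of_le (by norm_num : (0:ℝ)+1 ≤ 1+1)] at h2
      norm_num at h2
      refine h2.congr_fun (fun x _ => by norm_num) measurableSet_Ioc
    apply Integrable.mono' hbint
    · exact (cont_inv.mono Ioc_subset_Ioi_self).aestronglyMeasurable measurableSet_Ioc
    · rw [ae_restrict_iff' measurableSet_Ioc]
      filter_upwards with r hr
      obtain ⟨hr1, hr2⟩ := hr
      have h1 : (0:ℝ) < r - 1 := by linarith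
      have h2 : r - 1 ≤ r ^ 3 - 1 := by
        nlinarith [mul_nonneg (mul_nonneg (by linarith : (0:ℝ) ≤ r)
          (by linarith : (0:ℝ) ≤ r - 1)) (by linarith : (0:ℝ) ≤ r + 1)]
      have h3 : (0:ℝ) < Real.sqrt (r - 1) := Real.sqrt_pos.mpr h1
      have h4 : Real.sqrt (r - 1) ≤ Real.sqrt (r ^ 3 - 1) := Real.sqrt_le_sqrt h2
      rw [Real.norm_eq_abs, abs_of_nonneg (by positivity)]
      calc (Real.sqrt (r ^ 3 - 1))⁻¹ ≤ (Real.sqrt (r - 1))⁻¹ := by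
            exact inv_anti₀ h3 h4
        _ = (r - 1) ^ (-(1:ℝ)/2) := by
            rw [Real.sqrt_eq_rpow, ← Real.rpow_neg_one, ← Real.rpow_mul h1.le]
            norm_num
  have h2i : IntegrableOn (fun r : ℝ => (Real.sqrt (r ^ 3 - 1))⁻¹) (Ioi 2) := by
    have hbint : IntegrableOn (fun r : ℝ => Real.sqrt 2 * r ^ (-(3:ℝ)/2)) (Ioi 2) :=
      (integrableOn_Ioi_rpow_of_lt (by norm_num) (by norm_num)).const_mul _
    apply Integrable.mono' hbint
    · refine (cont_inv.mono ?_).aestronglyMeasurable measurableSet_Ioi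
      intro x hx; rw [mem_Ioi] at hx ⊢; linarith
    · rw [ae_restrict_iff' measurableSet_Ioi]
      filter_upwards with r hr
      rw [mem_Ioi] at hr
      have hr0 : (0:ℝ) < r := by linarith
      have h8 : (2:ℝ) ^ 3 < r ^ 3 := pow_lt_pow_left₀ hr (by norm_num) (by norm_num)
      have h1 : (0:ℝ) < r ^ 3 - 1 := by norm_num at h8; linarith
      have h2 : r ^ 3 ≤ 2 * (r ^ 3 - 1) := by norm_num at h8; linarith
      have h3 : Real.sqrt (r ^ 3) ≤ Real.sqrt 2 * Real.sqrt (r ^ 3 - 1) := by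
        rw [← Real.sqrt_mul (by norm_num : (0:ℝ) ≤ 2)]
        exact Real.sqrt_le_sqrt h2
      have h4 : (0:ℝ) < Real.sqrt (r ^ 3 - 1) := Real.sqrt_pos.mpr h1
      have h5 : r ^ (-(3:ℝ)/2) = (Real.sqrt (r ^ 3))⁻¹ := by
        rw [Real.sqrt_eq_rpow, ← Real.rpow_natCast r 3, ← Real.rpow_mul hr0.le,
          ← Real.rpow_neg_one, ← Real.rpow_mul hr0.le]
        push_cast
        norm_num
      have h6 : (0:ℝ) < Real.sqrt (r ^ 3) := by positivity
      rw [Real.norm_eq_abs, abs_of_nonneg (by positivity), h5, ← div_eq_mul_inv,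
        le_div_iff₀ h6, inv_mul_le_iff₀ h4]
      nlinarith [h3]
  have := h12.union h2i
  rwa [Ioc_union_Ioi_eq_Ioi (by norm_num : (1:ℝ) ≤ 2)] at this

lemma ftc {R : ℝ} (hR : 1 ≤ R) :
    ∫ r in (1:ℝ)..R, Real.sqrt (r ^ 3 - 1)
      = (2/5) * (R * Real.sqrt (R ^ 3 - 1))
        - (3/5) * ∫ r in (1:ℝ)..R, (Real.sqrt (r ^ 3 - 1))⁻¹ := by
  set f' : ℝ → ℝ := fun x =>
    (5/2) * Real.sqrt (x ^ 3 - 1) + (3/2) * (Real.sqrt (x ^ 3 - 1))⁻¹ with hf'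
  have hsqrt_int : IntervalIntegrable (fun x : ℝ => Real.sqrt (x ^ 3 - 1)) volume 1 R :=
    (Continuous.intervalIntegrable (by continuity) 1 R)
  have hinv_int : IntervalIntegrable (fun x : ℝ => (Real.sqrt (x ^ 3 - 1))⁻¹) volume 1 R := by
    rw [intervalIntegrable_iff_integrableOn_Ioc_of_le hR]
    exact inv_integrable.mono_set Ioc_subset_Ioi_self
  have hint : IntervalIntegrable f' volume 1 R :=
    (hsqrt_int.const_mul _).add (hinv_int.const_mul _)
  have hcont : ContinuousOn (fun x : ℝ => x * Real.sqrt (x ^ 3 - 1)) (Icc 1 R) :=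
    (Continuous.continuousOn (by continuity))
  have hderiv : ∀ x ∈ Ioo (1:ℝ) R,
      HasDerivAt (fun x : ℝ => x * Real.sqrt (x ^ 3 - 1)) (f' x) x := by
    intro x hx
    have hx1 : 1 < x := hx.1
    have h1 : (0:ℝ) < x ^ 3 - 1 := by
      have := one_lt_pow₀ hx1 (by norm_num : 3 ≠ 0)
      linarith
    have hs : (0:ℝ) < Real.sqrt (x ^ 3 - 1) := Real.sqrt_pos.mpr h1
    have hinner : HasDerivAt (fun x : ℝ => x ^ 3 - 1) (3 * x ^ 2) x := by
      have := (hasDerivAt_pow 3 x).sub_const 1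
      have e : 3 * x ^ 2 = ((3:ℕ):ℝ) * x ^ (3 - 1) := by norm_num
      rw [e]; exact this
    have hsq : HasDerivAt (fun x : ℝ => Real.sqrt (x ^ 3 - 1))
        (1 / (2 * Real.sqrt (x ^ 3 - 1)) * (3 * x ^ 2)) x :=
      (Real.hasDerivAt_sqrt h1.ne').comp x hinner
    have := (hasDerivAt_id x).mul hsq
    have hss : Real.sqrt (x ^ 3 - 1) * Real.sqrt (x ^ 3 - 1) = x ^ 3 - 1 :=
      Real.mul_self_sqrt h1.le
    have e : f' x = 1 * Real.sqrt (x ^ 3 - 1)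
        + id x * (1 / (2 * Real.sqrt (x ^ 3 - 1)) * (3 * x ^ 2)) := by
      rw [hf']
      simp only [id]
      field_simp
      nlinarith [hss]
    rw [e]; exact this
  have hFTC := intervalIntegral.integral_eq_sub_of_hasDerivAt_of_le hR hcont hderiv hint
  norm_num at hFTC
  have hsplit : ∫ x in (1:ℝ)..R, f' x
      = (5/2) * (∫ x in (1:ℝ)..R, Real.sqrt (x ^ 3 - 1))
        + (3/2) * ∫ x in (1:ℝ)..R, (Real.sqrt (x ^ 3 - 1))⁻¹ := by
    rw [hf', intervalIntegral.integral_add (hsqrt_int.const_mul _) (hinv_int.const_mul _),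
      intervalIntegral.integral_const_mul, intervalIntegral.integral_const_mul]
  rw [hsplit] at hFTC
  linarith

lemma tail_tendsto :
    Tendsto (fun R : ℝ => (2/5) * (R * Real.sqrt (R ^ 3 - 1)) - (2/5) * R ^ ((5:ℝ)/2))
      atTop (𝓝 0) := by
  have hlow : Tendsto (fun R : ℝ => -(2/5) * R ^ (-((1:ℝ)/2))) atTop (𝓝 0) := by
    have := (tendsto_rpow_neg_atTop (by norm_num : (0:ℝ) < 1/2)).const_mul (-(2/5) : ℝ)
    simpa using this
  refine tendsto_of_tendsto_of_tendsto_of_le_of_le' hlow tendsto_const_nhds ?_ ?_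
  · filter_upwards [eventually_ge_atTop (1:ℝ)] with R hR
    have hR0 : (0:ℝ) < R := by linarith
    have h31 : (0:ℝ) ≤ R ^ 3 - 1 := by
      have := one_le_pow₀ hR (n := 3)
      linarith
    set s := Real.sqrt (R ^ 3 - 1) with hs
    set t := R ^ ((3:ℝ)/2) with htdef
    have hs0 : 0 ≤ s := Real.sqrt_nonneg _
    have hs2 : s ^ 2 = R ^ 3 - 1 := Real.sq_sqrt h31
    have ht0 : 0 < t := Real.rpow_pos_of_pos hR0 _
    have ht2 : t ^ 2 = R ^ 3 := by
      rw [htdef, ← Real.rpow_natCast (R ^ ((3:ℝ)/2)) 2, ← Real.rpow_mul hR0.le,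
        ← Real.rpow_natCast R 3]
      norm_num
    have hst : s ≤ t := by nlinarith
    have h52 : R ^ ((5:ℝ)/2) = R * t := by
      rw [htdef, show ((5:ℝ)/2) = 1 + 3/2 by norm_num, Real.rpow_add hR0, Real.rpow_one]
    have hut : R ^ (-((1:ℝ)/2)) * t = R := by
      rw [htdef, ← Real.rpow_add hR0]
      norm_num
    have hu0 : 0 < R ^ (-((1:ℝ)/2)) := Real.rpow_pos_of_pos hR0 _
    rw [h52]
    have h1 : t ^ 2 - s * t ≤ 1 := by
      nlinarith [mul_nonneg hs0 (sub_nonneg.mpr hst)]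
    have key : R * (t - s) * t ≤ R := by
      have h2 := mul_le_mul_of_nonneg_left h1 hR0.le
      nlinarith [h2]
    have key2 : R * (t - s) ≤ R ^ (-((1:ℝ)/2)) := by
      have h3 : R * (t - s) * t ≤ R ^ (-((1:ℝ)/2)) * t := by rw [hut]; exact key
      exact le_of_mul_le_mul_right h3 ht0
    nlinarith
  · filter_upwards [eventually_ge_atTop (1:ℝ)] with R hR
    have hR0 : (0:ℝ) < R := by linarith
    have h31 : (0:ℝ) ≤ R ^ 3 - 1 := by
      have := one_le_pow₀ hR (n := 3)
      linarith
    have hst : Real.sqrt (R ^ 3 - 1) ≤ R ^ ((3:ℝ)/2) := by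
      have h1 : Real.sqrt (R ^ 3 - 1) ≤ Real.sqrt (R ^ 3) := Real.sqrt_le_sqrt (by linarith)
      have h2 : Real.sqrt (R ^ 3) = R ^ ((3:ℝ)/2) := by
        rw [Real.sqrt_eq_rpow, ← Real.rpow_natCast R 3, ← Real.rpow_mul hR0.le]
        norm_num
      linarith
    have h52 : R ^ ((5:ℝ)/2) = R * R ^ ((3:ℝ)/2) := by
      rw [show ((5:ℝ)/2) = 1 + 3/2 by norm_num, Real.rpow_add hR0, Real.rpow_one]
    rw [h52]
    nlinarith

theorem stmt14 :
    Tendsto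
      (fun R : ℝ => (∫ r in (1:ℝ)..R, Real.sqrt (r ^ 3 - 1)) - (2 / 5) * R ^ ((5 : ℝ) / 2))
      atTop
      (𝓝 (-(Real.sqrt 3 / 5) * (Real.Gamma (1 / 2) * Real.Gamma (1 / 3) / Real.Gamma (5 / 6)))) := by
  set I : ℝ := ∫ r in Ioi (1:ℝ), (Real.sqrt (r ^ 3 - 1))⁻¹ with hI
  have hlim : Tendsto (fun R : ℝ => ∫ r in (1:ℝ)..R, (Real.sqrt (r ^ 3 - 1))⁻¹)
      atTop (𝓝 I) :=
    MeasureTheory.intervalIntegral_tendsto_integral_Ioi 1 inv_integrable tendsto_id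
  have hcomb : Tendsto
      (fun R : ℝ => ((2/5) * (R * Real.sqrt (R ^ 3 - 1)) - (2/5) * R ^ ((5:ℝ)/2))
        - (3/5) * ∫ r in (1:ℝ)..R, (Real.sqrt (r ^ 3 - 1))⁻¹)
      atTop (𝓝 (0 - (3/5) * I)) :=
    tail_tendsto.sub (hlim.const_mul _)
  have heq : (fun R : ℝ => ((2/5) * (R * Real.sqrt (R ^ 3 - 1)) - (2/5) * R ^ ((5:ℝ)/2))
        - (3/5) * ∫ r in (1:ℝ)..R, (Real.sqrt (r ^ 3 - 1))⁻¹)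
      =ᶠ[atTop]
      (fun R : ℝ => (∫ r in (1:ℝ)..R, Real.sqrt (r ^ 3 - 1)) - (2/5) * R ^ ((5:ℝ)/2)) := by
    filter_upwards [eventually_ge_atTop (1:ℝ)] with R hR
    rw [ftc hR]
    ring
  have hval : (0:ℝ) - (3/5) * I
      = -(Real.sqrt 3 / 5) * (Real.Gamma (1/2) * Real.Gamma (1/3) / Real.Gamma (5/6)) := by
    have h1 : (3:ℝ) * I = Real.Gamma (1/6) * Real.Gamma (1/2) / Real.Gamma (2/3) := by
      rw [← subst_val, beta_val]
    have h2 := gamma_ident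
    have p23 : (0:ℝ) < Real.Gamma (2/3) := Real.Gamma_pos_of_pos (by norm_num)
    have p56 : (0:ℝ) < Real.Gamma (5/6) := Real.Gamma_pos_of_pos (by norm_num)
    have hIval : I = Real.Gamma (1/6) * Real.Gamma (1/2) / Real.Gamma (2/3) / 3 := by
      linarith
    rw [hIval]
    field_simp at h2 ⊢
    linear_combination (-Real.Gamma (1/2)) * h2
  rw [← hval]
  exact hcomb.congr' heq
end
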